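/- arXiv:2210.15249 — 3 statements merged into one kernel-verified Lean document; each statement's English description precedes it below -/
import Mathlib

section
/- Let X be a non-trivial connected twin-free graph in which every edge lies on a triangle. If for all pairs of adjacent vertices x,y and all pairs of vertices z,w at distance 2, the number of common neighbours of x and y differs from the number of common neighbours of z and w, then X is stable. -/
open SimpleGraph

/-- The canonical double cover `BX = X × K₂` of a graph `X`:
vertex set `V × Bool`, with `(x,i)` adjacent to `(y,j)` iff `x ~ y` in `X` and `i ≠ j`. -/
def doubleCover {V : Type*} (X : SimpleGraph V) : SimpleGraph (V × Bool) where
  Adj p q := X.Adj p.1 q.1 ∧ p.2 ≠ q.2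
  symm := ⟨fun p q h => ⟨h.1.symm, Ne.symm h.2⟩⟩
  loopless := ⟨fun p h => h.2 rfl⟩

/-- An automorphism of `BX` is *expected* if it lies in the subgroup generated by the
lifts of automorphisms of `X` and the coordinate swap `τ`, i.e. it has the form
`(x,i) ↦ (φ x, i + b)` for some automorphism `φ` of `X` and some `b`. -/
def IsExpected {V : Type*} (X : SimpleGraph V) (α : doubleCover X ≃g doubleCover X) : Prop :=
  ∃ (φ : X ≃g X) (b : Bool), ∀ p : V × Bool, α p = (φ p.1, xor p.2 b)

/-- A graph is *stable* if every automorphism of its canonical double cover is expected. -/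
def IsStable {V : Type*} (X : SimpleGraph V) : Prop :=
  ∀ α : doubleCover X ≃g doubleCover X, IsExpected X α

/-- A graph is *twin-free* if distinct vertices have distinct neighbourhoods. -/
def TwinFree {V : Type*} (X : SimpleGraph V) : Prop :=
  ∀ u v : V, X.neighborSet u = X.neighborSet v → u = v

/-!
Since every edge of `X` lies on a triangle, `BX` is connected, so an automorphism `α` of `BX`
either preserves or swaps the two levels; its restrictions to the two levels then form a
two-fold automorphism `(f, g)` of `X`, i.e. `u ~ v ↔ f u ~ g v`. If `x ~ y` but `f x ≁ f y`,
then `f x` and `f y` are at distance two (through `g w` for a triangle `x y w`) and `g` maps the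
common neighbours of `x, y` bijectively onto those of `f x, f y`, contradicting the hypothesis on
the counts. Hence `f` (and likewise `f⁻¹`) preserves adjacency, so `f` is an automorphism, and
then `N(g v) = N(f v)` forces `g = f` by twin-freeness.
-/

lemma SimpleGraph.Preconnected.apply_eq_of_forall_adj {W β : Type*} {G : SimpleGraph W}
    (hG : G.Preconnected) {c : W → β} (hc : ∀ p q, G.Adj p q → c p = c q) (p q : W) :
    c p = c q := by
  obtain ⟨w⟩ := hG p q
  induction w with
  | nil => rfl
  | cons hadj _ ih => exact (hc _ _ hadj).trans ih

lemma SimpleGraph.dist_eq_two_of_adj_of_adj {V : Type*} {X : SimpleGraph V} {u v w : V}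
    (hne : u ≠ v) (hnadj : ¬X.Adj u v) (huw : X.Adj u w) (hvw : X.Adj v w) :
    X.dist u v = 2 := by
  rw [dist, edist_eq_two_iff.mpr ⟨hne, hnadj, w, huw, hvw⟩]
  rfl

/-- Two-fold automorphisms (TF-automorphisms) of `X`; they correspond exactly to the
level-preserving automorphisms of `BX`. -/
def IsTwoFoldAut {V : Type*} (X : SimpleGraph V) (f g : V ≃ V) : Prop :=
  ∀ u v, X.Adj (f u) (g v) ↔ X.Adj u v

namespace IsTwoFoldAut

variable {V : Type*} {X : SimpleGraph V} {f g : V ≃ V}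

lemma symm (h : IsTwoFoldAut X f g) : IsTwoFoldAut X f.symm g.symm := fun u v => by
  rw [← h, f.apply_symm_apply, g.apply_symm_apply]

lemma commonNeighbors_apply (h : IsTwoFoldAut X f g) (x y : V) :
    X.commonNeighbors (f x) (f y) = g '' X.commonNeighbors x y := by
  ext v
  rw [g.image_eq_preimage_symm]
  simp only [Set.mem_preimage, mem_commonNeighbors, ← h _ (g.symm v), g.apply_symm_apply]

lemma adj_apply (h : IsTwoFoldAut X f g)
    (htri : ∀ u v : V, X.Adj u v → ∃ w : V, X.Adj u w ∧ X.Adj v w)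
    (hcn : ∀ x y z w : V, X.Adj x y → X.dist z w = 2 →
      (X.commonNeighbors x y).ncard ≠ (X.commonNeighbors z w).ncard)
    {x y : V} (hxy : X.Adj x y) : X.Adj (f x) (f y) := by
  by_contra hnadj
  obtain ⟨w, hxw, hyw⟩ := htri x y hxy
  have hdist : X.dist (f x) (f y) = 2 :=
    dist_eq_two_of_adj_of_adj (f.injective.ne hxy.ne) hnadj ((h x w).2 hxw) ((h y w).2 hyw)
  refine hcn x y (f x) (f y) hxy hdist ?_
  rw [h.commonNeighbors_apply, Set.ncard_image_of_injective _ g.injective]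

lemma adj_apply_iff (h : IsTwoFoldAut X f g)
    (htri : ∀ u v : V, X.Adj u v → ∃ w : V, X.Adj u w ∧ X.Adj v w)
    (hcn : ∀ x y z w : V, X.Adj x y → X.dist z w = 2 →
      (X.commonNeighbors x y).ncard ≠ (X.commonNeighbors z w).ncard)
    (x y : V) : X.Adj (f x) (f y) ↔ X.Adj x y :=
  ⟨fun hxy => by simpa using h.symm.adj_apply htri hcn hxy, h.adj_apply htri hcn⟩

lemma eq_of_twinFree (h : IsTwoFoldAut X f g) (htf : TwinFree X)
    (hf : ∀ x y, X.Adj (f x) (f y) ↔ X.Adj x y) : g = f :=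
  Equiv.ext fun v => htf _ _ <| Set.ext fun u => by
    obtain ⟨u, rfl⟩ := f.surjective u
    rw [mem_neighborSet, mem_neighborSet, X.adj_comm, h, X.adj_comm, hf]

end IsTwoFoldAut

namespace doubleCover

variable {V : Type*} {X : SimpleGraph V}

lemma reachable_false_true_of_triangle {x y z : V}
    (hxy : X.Adj x y) (hyz : X.Adj y z) (hzx : X.Adj z x) :
    (doubleCover X).Reachable (x, false) (x, true) :=
  have hxy' : (doubleCover X).Adj (x, false) (y, true) := ⟨hxy, Bool.false_ne_true⟩
  have hyz' : (doubleCover X).Adj (y, true) (z, false) := ⟨hyz, by simp⟩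
  have hzx' : (doubleCover X).Adj (z, false) (x, true) := ⟨hzx, Bool.false_ne_true⟩
  hxy'.reachable.trans (hyz'.reachable.trans hzx'.reachable)

lemma preconnected (hX : X.Preconnected)
    (hflip : ∀ x, (doubleCover X).Reachable (x, false) (x, true)) :
    (doubleCover X).Preconnected := by
  have hlevel : ∀ x (i j : Bool), (doubleCover X).Reachable (x, i) (x, j) := by
    intro x i j
    cases i <;> cases j
    exacts [.refl _, hflip x, (hflip x).symm, .refl _]
  rintro ⟨x, i⟩ ⟨y, j⟩
  obtain ⟨w⟩ := hX x y
  induction w generalizing i with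
  | nil => exact hlevel _ i j
  | cons hadj _ ih =>
    have hadj' : (doubleCover X).Adj (_, i) (_, !i) := ⟨hadj, by cases i <;> simp⟩
    exact hadj'.reachable.trans (ih !i)

lemma connected_of_forall_adj_exists_common_adj [Nontrivial V] (hX : X.Connected)
    (htri : ∀ u v : V, X.Adj u v → ∃ w : V, X.Adj u w ∧ X.Adj v w) :
    (doubleCover X).Connected := by
  refine ⟨preconnected hX.preconnected fun x => ?_⟩
  obtain ⟨y, hxy⟩ := hX.preconnected.exists_adj_of_nontrivial x
  obtain ⟨z, hxz, hyz⟩ := htri x y hxy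
  exact reachable_false_true_of_triangle hxy hyz hxz.symm

lemma exists_level_shift (hB : (doubleCover X).Connected) (α : doubleCover X ≃g doubleCover X) :
    ∃ b : Bool, ∀ p, (α p).2 = xor p.2 b := by
  have hc : ∀ p q, (doubleCover X).Adj p q → xor p.2 (α p).2 = xor q.2 (α q).2 :=
    fun p q hpq => by
      have hα := (α.map_rel_iff.mpr hpq).2
      have := hpq.2
      revert hα this
      cases p.2 <;> cases q.2 <;> cases (α p).2 <;> cases (α q).2 <;> decide
  obtain ⟨p₀⟩ := hB.nonempty
  refine ⟨xor p₀.2 (α p₀).2, fun p => ?_⟩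
  rw [← hB.preconnected.apply_eq_of_forall_adj hc p p₀]
  cases p.2 <;> cases (α p).2 <;> rfl

section levelEquiv

variable (α : doubleCover X ≃g doubleCover X) {b : Bool} (hb : ∀ p, (α p).2 = xor p.2 b)

def levelEquiv (i : Bool) : V ≃ V where
  toFun v := (α (v, i)).1
  invFun v := (α.symm (v, xor i b)).1
  left_inv v := by
    have : ((α (v, i)).1, xor i b) = α (v, i) := Prod.ext rfl (hb (v, i)).symm
    simp only [this, RelIso.symm_apply_apply]
  right_inv v := by
    have hq := hb (α.symm (v, xor i b))
    rw [RelIso.apply_symm_apply] at hq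
    have : ((α.symm (v, xor i b)).1, i) = α.symm (v, xor i b) :=
      Prod.ext rfl (Bool.xor_left_inj.mp hq)
    simp only [this, RelIso.apply_symm_apply]

lemma apply_eq_levelEquiv (p : V × Bool) : α p = (levelEquiv α hb p.2 p.1, xor p.2 b) :=
  Prod.ext rfl (hb p)

lemma isTwoFoldAut_levelEquiv : IsTwoFoldAut X (levelEquiv α hb false) (levelEquiv α hb true) :=
  fun u v => by
    have := α.map_rel_iff (a := (u, false)) (b := (v, true))
    rw [apply_eq_levelEquiv α hb, apply_eq_levelEquiv α hb (v, true)] at this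
    simpa [doubleCover] using this

end levelEquiv

end doubleCover

theorem stable_of_triangle_edge_nonedge_general {V : Type*} [Nontrivial V]
    (X : SimpleGraph V) (hconn : X.Connected) (htf : TwinFree X)
    (htri : ∀ u v : V, X.Adj u v → ∃ w : V, X.Adj u w ∧ X.Adj v w)
    (h : ∀ x y z w : V, X.Adj x y → X.dist z w = 2 →
      (X.neighborSet x ∩ X.neighborSet y).ncard ≠
        (X.neighborSet z ∩ X.neighborSet w).ncard) :
    IsStable X := by
  intro α
  have hB := doubleCover.connected_of_forall_adj_exists_common_adj hconn htri
  obtain ⟨b, hb⟩ := doubleCover.exists_level_shift hB α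
  have hfg := doubleCover.isTwoFoldAut_levelEquiv α hb
  have hf := hfg.adj_apply_iff htri h
  have hgf := hfg.eq_of_twinFree htf hf
  refine ⟨⟨doubleCover.levelEquiv α hb false, hf _ _⟩, b, fun ⟨x, i⟩ => ?_⟩
  rw [doubleCover.apply_eq_levelEquiv α hb]
  cases i
  · rfl
  · rw [hgf]
    rfl

theorem stable_of_triangle_edge_nonedge {V : Type*} [Fintype V] [Nontrivial V]
    (X : SimpleGraph V) (hconn : X.Connected) (htf : TwinFree X)
    (htri : ∀ u v : V, X.Adj u v → ∃ w : V, X.Adj u w ∧ X.Adj v w)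
    (h : ∀ x y z w : V, X.Adj x y → X.dist z w = 2 →
      (X.neighborSet x ∩ X.neighborSet y).ncard ≠
        (X.neighborSet z ∩ X.neighborSet w).ncard) :
    IsStable X :=
  stable_of_triangle_edge_nonedge_general X hconn htf htri h
end

section
/- For n ≥ 6 with n ≠ 6 and 1 ≤ k ≤ n−1 with (n,k) ∉ {(2,1),(4,2)}, the Johnson graph J(n,k) is stable. -/
open SimpleGraph

/-- The Johnson graph `J(n,k)`: vertices are the `k`-element subsets of `{1,…,n}`,
two subsets being adjacent iff their intersection has `k-1` elements. -/
def johnsonGraph (n k : ℕ) : SimpleGraph {s : Finset (Fin n) // s.card = k} where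
  Adj s t := s ≠ t ∧ (s.1 ∩ t.1).card = k - 1
  symm := ⟨fun s t h => ⟨h.1.symm, by rw [Finset.inter_comm]; exact h.2⟩⟩
  loopless := ⟨fun s h => h.1 rfl⟩

/-
For `n ≥ 7`, two distinct vertices of `J(n,k)` are adjacent iff they have at least 5 common
neighbours: adjacent ones have `n - 2`, non-adjacent ones at most 4. In the double cover
`(u,i)` and `(v,j)` have no common neighbour when `i ≠ j`, and otherwise as many as `u` and `v`
in `X`. Hence every automorphism of `BX` preserves the relation "same layer and adjacent in `X`";
by connectivity it maps layers onto layers, its restrictions to the two layers are automorphisms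
of `X`, and since the threshold property makes `X` twin-free, these two restrictions coincide.
-/

namespace SimpleGraph

variable {V W : Type*}

lemma Iso.ncard_commonNeighbors {G : SimpleGraph V} {G' : SimpleGraph W} (φ : G ≃g G')
    (u v : V) :
    (G'.commonNeighbors (φ u) (φ v)).ncard = (G.commonNeighbors u v).ncard := by
  rw [commonNeighbors, commonNeighbors, ← φ.image_neighborSet, ← φ.image_neighborSet,
    ← Set.image_inter φ.injective, Set.ncard_image_of_injective _ φ.injective]

lemma Reachable.eq_of_forall_adj {β : Type*} {G : SimpleGraph V} {f : V → β}
    (hf : ∀ u v, G.Adj u v → f u = f v) {u v : V} (h : G.Reachable u v) : f u = f v := by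
  rw [reachable_iff_reflTransGen] at h
  induction h with
  | refl => rfl
  | tail _ hadj ih => exact ih.trans (hf _ _ hadj)

def CommonNeighborThreshold (X : SimpleGraph V) (m : ℕ) : Prop :=
  ∀ ⦃u v : V⦄, u ≠ v → (X.Adj u v ↔ m ≤ (X.commonNeighbors u v).ncard)

variable {X : SimpleGraph V}

lemma TwinFree.eq_of_forall_adj_iff (hX : TwinFree X) {f : W → V} (hf : Function.Surjective f)
    {u v : V} (h : ∀ x, X.Adj u (f x) ↔ X.Adj v (f x)) : u = v :=
  hX u v <| Set.ext fun w => by obtain ⟨x, rfl⟩ := hf w; exact h x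

lemma CommonNeighborThreshold.twinFree [Finite V] {m : ℕ} (hX : X.CommonNeighborThreshold m)
    (hiso : ∀ v, ¬ X.IsIsolated v) : TwinFree X := by
  intro u v huv
  by_contra hne
  have hnadj : ¬ X.Adj u v := fun h =>
    X.loopless.irrefl v (show v ∈ X.neighborSet v from huv ▸ h)
  obtain ⟨w, huw⟩ : ∃ w, X.Adj u w := by simpa [IsIsolated] using hiso u
  have hw := (hX huw.ne).mp huw
  have hv := mt (hX hne).mpr hnadj
  rw [commonNeighbors, ← huv, Set.inter_self] at hv
  exact hv (hw.trans (Set.ncard_le_ncard Set.inter_subset_left))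

lemma doubleCover_commonNeighbors_of_eq {p q : V × Bool} (h : p.2 = q.2) :
    (doubleCover X).commonNeighbors p q = X.commonNeighbors p.1 q.1 ×ˢ {!p.2} := by
  ext ⟨w, j⟩
  cases hp : p.2 <;> cases hq : q.2 <;> cases j <;> simp_all [commonNeighbors, doubleCover]

lemma doubleCover_commonNeighbors_of_ne {p q : V × Bool} (h : p.2 ≠ q.2) :
    (doubleCover X).commonNeighbors p q = ∅ := by
  ext ⟨w, j⟩
  cases hp : p.2 <;> cases hq : q.2 <;> cases j <;> simp_all [commonNeighbors, doubleCover]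

lemma ncard_commonNeighbors_doubleCover (p q : V × Bool) :
    ((doubleCover X).commonNeighbors p q).ncard =
      if p.2 = q.2 then (X.commonNeighbors p.1 q.1).ncard else 0 := by
  split_ifs with h
  · rw [doubleCover_commonNeighbors_of_eq h, Set.ncard_prod, Set.ncard_singleton, mul_one]
  · rw [doubleCover_commonNeighbors_of_ne h, Set.ncard_empty]

lemma CommonNeighborThreshold.ne_and_le_ncard_commonNeighbors_doubleCover_iff {m : ℕ}
    (hm : 0 < m) (hX : X.CommonNeighborThreshold m) (p q : V × Bool) :
    p ≠ q ∧ m ≤ ((doubleCover X).commonNeighbors p q).ncard ↔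
      p.2 = q.2 ∧ X.Adj p.1 q.1 := by
  rw [ncard_commonNeighbors_doubleCover]
  by_cases h : p.2 = q.2
  · have hne : p ≠ q ↔ p.1 ≠ q.1 := by simp [Prod.ext_iff, h]
    rw [if_pos h, hne]
    exact ⟨fun ⟨hne, hle⟩ => ⟨h, (hX hne).mpr hle⟩,
      fun ⟨_, hadj⟩ => ⟨hadj.ne, (hX hadj.ne).mp hadj⟩⟩
  · simp [h, hm.ne']

lemma CommonNeighborThreshold.snd_eq_and_adj_apply_iff {m : ℕ} (hm : 0 < m)
    (hX : X.CommonNeighborThreshold m) (α : doubleCover X ≃g doubleCover X) (p q : V × Bool) :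
    (α p).2 = (α q).2 ∧ X.Adj (α p).1 (α q).1 ↔ p.2 = q.2 ∧ X.Adj p.1 q.1 := by
  rw [← hX.ne_and_le_ncard_commonNeighbors_doubleCover_iff hm,
    ← hX.ne_and_le_ncard_commonNeighbors_doubleCover_iff hm, α.ncard_commonNeighbors,
    α.injective.ne_iff]

lemma Connected.exists_snd_apply_eq_xor (hconn : X.Connected)
    (α : doubleCover X ≃g doubleCover X)
    (hα : ∀ u v i, X.Adj u v → (α (u, i)).2 = (α (v, i)).2) :
    ∃ b, ∀ p, (α p).2 = xor p.2 b := by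
  obtain ⟨v₀⟩ := hconn.nonempty
  have hlayer : ∀ v i, (α (v, i)).2 = (α (v₀, i)).2 := fun v i =>
    (hconn v v₀).eq_of_forall_adj (f := fun v => (α (v, i)).2) fun u w h => hα u w i h
  have hswap : (α (v₀, true)).2 = !(α (v₀, false)).2 := by
    obtain ⟨⟨v, i⟩, hv⟩ := α.surjective (v₀, !(α (v₀, false)).2)
    have hsnd := congrArg Prod.snd hv
    rw [hlayer] at hsnd
    cases i
    · simp at hsnd
    · exact hsnd
  refine ⟨(α (v₀, false)).2, fun ⟨v, i⟩ => ?_⟩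
  cases i <;> simp [hlayer v, hswap]

theorem CommonNeighborThreshold.isStable {m : ℕ} (hm : 0 < m) (hX : X.CommonNeighborThreshold m)
    (hconn : X.Connected) (htf : TwinFree X) : IsStable X := by
  intro α
  have hα := hX.snd_eq_and_adj_apply_iff hm α
  obtain ⟨b, hb⟩ := hconn.exists_snd_apply_eq_xor α fun u v i h =>
    ((hα (u, i) (v, i)).mpr ⟨rfl, h⟩).1
  set f : Bool → V → V := fun i v => (α (v, i)).1
  have hαf : ∀ p, α p = (f p.2 p.1, xor p.2 b) := fun p => Prod.ext rfl (hb p)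
  have hf_adj : ∀ i j u v, X.Adj (f i u) (f j v) ↔ X.Adj u v := by
    intro i j u v
    by_cases hij : i = j
    · subst hij
      simpa [hαf] using hα (u, i) (v, i)
    · have h := α.map_adj_iff (v := (u, i)) (w := (v, j))
      rw [hαf, hαf] at h
      simpa [doubleCover, hij] using h
  have hsurj : Function.Surjective (f false) := by
    intro w
    obtain ⟨⟨v, i⟩, hv⟩ := α.surjective (w, b)
    rw [hαf] at hv
    cases i
    · exact ⟨v, congrArg Prod.fst hv⟩
    · simp at hv
  have hinj : Function.Injective (f false) := fun u v h =>
    congrArg Prod.fst (α.injective (by rw [hαf, hαf]; simp [h]) : (u, false) = (v, false))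
  have hft : f true = f false :=
    funext fun v => htf.eq_of_forall_adj_iff hsurj fun x => by rw [hf_adj, hf_adj]
  refine ⟨⟨Equiv.ofBijective _ ⟨hinj, hsurj⟩, hf_adj false false _ _⟩, b,
    fun ⟨v, i⟩ => ?_⟩
  rw [hαf, show f i = f false by cases i <;> simp only [hft]]
  rfl

end SimpleGraph

open Finset SimpleGraph

lemma Finset.sdiff_eq_sdiff_union_sdiff_of_card_le {α : Type*} [DecidableEq α] {s t r : Finset α}
    (h : #(s \ r) + #(r \ t) ≤ #(s \ t)) : s \ t = s \ r ∪ r \ t :=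
  eq_of_subset_of_card_le (sdiff_triangle s r t) ((card_union_le _ _).trans h)

section JohnsonGraph

variable {n k : ℕ} {u v : {s : Finset (Fin n) // #s = k}}

lemma johnsonGraph_adj_iff_card_sdiff : (johnsonGraph n k).Adj u v ↔ #(u.1 \ v.1) = 1 := by
  have hcard := card_sdiff_add_card_inter u.1 v.1
  rw [u.2] at hcard
  constructor
  · rintro ⟨hne, hint⟩
    have hpos : #(u.1 \ v.1) ≠ 0 := by
      rw [Ne, card_eq_zero, sdiff_eq_empty_iff_subset]
      exact fun hsub => hne (Subtype.ext (eq_of_subset_of_card_le hsub (by rw [u.2, v.2])))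
    omega
  · intro h
    exact ⟨fun huv => by simp [huv] at h, by omega⟩

lemma johnsonGraph_exists_adj_insert_erase {a b : Fin n} (ha : a ∈ u.1) (hb : b ∉ u.1) :
    ∃ w, (johnsonGraph n k).Adj u w ∧ w.1 = insert b (u.1.erase a) := by
  have hcard : #(insert b (u.1.erase a)) = k := by
    rw [card_insert_of_notMem (fun h => hb (mem_of_mem_erase h)), card_erase_of_mem ha, u.2]
    have := card_pos.mpr ⟨a, ha⟩
    omega
  refine ⟨⟨_, hcard⟩, johnsonGraph_adj_iff_card_sdiff.mpr ?_, rfl⟩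
  rw [sdiff_insert_of_notMem hb, sdiff_erase_self ha, card_singleton]

lemma johnsonGraph_preconnected : (johnsonGraph n k).Preconnected := by
  intro u v
  induction hd : #(u.1 \ v.1) generalizing u with
  | zero =>
    rw [card_eq_zero, sdiff_eq_empty_iff_subset] at hd
    rw [Subtype.ext (eq_of_subset_of_card_le hd (by rw [u.2, v.2]))]
  | succ d ih =>
    obtain ⟨a, ha⟩ : (u.1 \ v.1).Nonempty := card_pos.mp (by omega)
    obtain ⟨b, hb⟩ : (v.1 \ u.1).Nonempty := by
      rw [← card_pos, ← card_sdiff_comm (by rw [u.2, v.2])]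
      omega
    rw [mem_sdiff] at ha hb
    obtain ⟨w, huw, hw⟩ := johnsonGraph_exists_adj_insert_erase ha.1 hb.2
    refine huw.reachable.trans (ih w ?_)
    rw [hw, insert_sdiff_of_mem _ hb.1, erase_sdiff_comm, card_erase_of_mem (mem_sdiff.mpr ha), hd,
      Nat.add_sub_cancel]

lemma johnsonGraph_connected (hk : k ≤ n) : (johnsonGraph n k).Connected := by
  obtain ⟨s, -, hs⟩ := exists_subset_card_eq (s := (univ : Finset (Fin n))) (by simpa using hk)
  exact (connected_iff _).mpr ⟨johnsonGraph_preconnected, ⟨⟨s, hs⟩⟩⟩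

lemma johnsonGraph_not_isIsolated (hk1 : 1 ≤ k) (hk2 : k < n)
    (u : {s : Finset (Fin n) // #s = k}) :
    ¬ (johnsonGraph n k).IsIsolated u := by
  obtain ⟨a, ha⟩ : u.1.Nonempty := card_pos.mp (by rw [u.2]; omega)
  obtain ⟨b, hb⟩ : u.1ᶜ.Nonempty := by
    rw [← card_pos, card_compl, u.2, Fintype.card_fin]
    omega
  obtain ⟨w, huw, -⟩ := johnsonGraph_exists_adj_insert_erase ha (mem_compl.mp hb)
  exact fun h => h w huw

lemma johnsonGraph_mem_image_val_commonNeighbors {w : Finset (Fin n)} :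
    w ∈ Subtype.val '' (johnsonGraph n k).commonNeighbors u v ↔
      #w = k ∧ #(u.1 \ w) = 1 ∧ #(v.1 \ w) = 1 := by
  constructor
  · rintro ⟨w, ⟨huw, hvw⟩, rfl⟩
    exact ⟨w.2, johnsonGraph_adj_iff_card_sdiff.mp huw, johnsonGraph_adj_iff_card_sdiff.mp hvw⟩
  · rintro ⟨hw, hu, hv⟩
    exact ⟨⟨w, hw⟩, ⟨johnsonGraph_adj_iff_card_sdiff.mpr hu,
      johnsonGraph_adj_iff_card_sdiff.mpr hv⟩, rfl⟩

lemma johnsonGraph_card_inter_add_one_of_adj (h : (johnsonGraph n k).Adj u v) :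
    #(u.1 ∩ v.1) + 1 = k := by
  have := card_sdiff_add_card_inter u.1 v.1
  rw [u.2, johnsonGraph_adj_iff_card_sdiff.mp h] at this
  omega

lemma johnsonGraph_card_union_of_adj (h : (johnsonGraph n k).Adj u v) :
    #(u.1 ∪ v.1) = k + 1 := by
  have := card_union_add_card_inter u.1 v.1
  have := johnsonGraph_card_inter_add_one_of_adj h
  rw [u.2, v.2] at *
  omega

lemma johnsonGraph_insert_inter_mem_commonNeighbors (h : (johnsonGraph n k).Adj u v)
    {c : Fin n} (hc : c ∉ u.1 ∪ v.1) :
    insert c (u.1 ∩ v.1) ∈ Subtype.val '' (johnsonGraph n k).commonNeighbors u v := by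
  rw [mem_union, not_or] at hc
  refine johnsonGraph_mem_image_val_commonNeighbors.mpr ⟨?_, ?_, ?_⟩
  · rw [card_insert_of_notMem fun hcA => hc.1 (mem_inter.mp hcA).1,
      johnsonGraph_card_inter_add_one_of_adj h]
  · rw [sdiff_insert_of_notMem hc.1, sdiff_inter_self_left, johnsonGraph_adj_iff_card_sdiff.mp h]
  · rw [sdiff_insert_of_notMem hc.2, inter_comm, sdiff_inter_self_left,
      johnsonGraph_adj_iff_card_sdiff.mp h.symm]

lemma johnsonGraph_erase_union_mem_commonNeighbors (h : (johnsonGraph n k).Adj u v)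
    {x : Fin n} (hx : x ∈ u.1 ∩ v.1) :
    (u.1 ∪ v.1).erase x ∈ Subtype.val '' (johnsonGraph n k).commonNeighbors u v := by
  rw [mem_inter] at hx
  refine johnsonGraph_mem_image_val_commonNeighbors.mpr ⟨?_, ?_, ?_⟩
  · rw [card_erase_of_mem (mem_union_left _ hx.1), johnsonGraph_card_union_of_adj h,
      Nat.add_sub_cancel]
  · rw [sdiff_erase hx.1, sdiff_eq_empty_iff_subset.mpr subset_union_left, insert_empty,
      card_singleton]
  · rw [sdiff_erase hx.2, sdiff_eq_empty_iff_subset.mpr subset_union_right, insert_empty,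
      card_singleton]

lemma johnsonGraph_le_ncard_commonNeighbors (h : (johnsonGraph n k).Adj u v) :
    n - 2 ≤ ((johnsonGraph n k).commonNeighbors u v).ncard := by
  have hinter := johnsonGraph_card_inter_add_one_of_adj h
  have hunion := johnsonGraph_card_union_of_adj h
  have hkn : k + 1 ≤ n := by simpa [hunion] using card_le_univ (u.1 ∪ v.1)
  obtain ⟨a, ha⟩ := card_eq_one.mp (johnsonGraph_adj_iff_card_sdiff.mp h)
  have ha' : a ∈ u.1 \ v.1 := ha ▸ mem_singleton_self a
  rw [mem_sdiff] at ha'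
  set A := u.1 ∩ v.1
  set U := u.1 ∪ v.1
  set S1 := Uᶜ.image (insert · A)
  set S2 := A.image U.erase
  have hS1 : #S1 = n - (k + 1) := by
    rw [card_image_of_injOn, card_compl, hunion, Fintype.card_fin]
    intro c hc c' _ he
    exact (insert_inj fun hcA => (mem_compl.mp hc) (inter_subset_union hcA)).mp he
  have hS2 : #S2 + 1 = k := by
    rw [card_image_of_injOn ((erase_injOn U).mono (coe_subset.mpr inter_subset_union)), hinter]
  -- `a ∈ u \ v` lies in every member of `S2` and in no member of `S1`
  have hdisj : Disjoint S1 S2 := by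
    rw [Finset.disjoint_left]
    simp only [S1, S2, mem_image, mem_compl, not_exists, not_and]
    rintro _ ⟨c, hc, rfl⟩ x hx he
    have haw : a ∈ U.erase x := mem_erase.mpr
      ⟨fun hax => ha'.2 (hax ▸ (mem_inter.mp hx).2), mem_union_left _ ha'.1⟩
    rw [he, mem_insert] at haw
    rcases haw with rfl | haA
    · exact hc (mem_union_left _ ha'.1)
    · exact ha'.2 (mem_inter.mp haA).2
  have hsub : (↑(S1 ∪ S2) : Set (Finset (Fin n))) ⊆
      Subtype.val '' (johnsonGraph n k).commonNeighbors u v := by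
    intro w hw
    rw [coe_union, Set.mem_union, mem_coe, mem_coe] at hw
    rcases hw with hw | hw
    · obtain ⟨c, hc, rfl⟩ := mem_image.mp hw
      exact johnsonGraph_insert_inter_mem_commonNeighbors h (mem_compl.mp hc)
    · obtain ⟨x, hx, rfl⟩ := mem_image.mp hw
      exact johnsonGraph_erase_union_mem_commonNeighbors h hx
  calc n - 2 ≤ #(S1 ∪ S2) := by rw [card_union_of_disjoint hdisj, hS1]; omega
    _ ≤ (Subtype.val '' (johnsonGraph n k).commonNeighbors u v).ncard := by
      rw [← Set.ncard_coe_finset]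
      exact Set.ncard_le_ncard hsub
    _ = _ := Set.ncard_image_of_injective _ Subtype.val_injective

lemma johnsonGraph_sdiff_eq_of_mem_commonNeighbors (hne : u ≠ v)
    (h : ¬ (johnsonGraph n k).Adj u v) {w : {s : Finset (Fin n) // #s = k}}
    (hw : w ∈ (johnsonGraph n k).commonNeighbors u v) :
    #(u.1 \ v.1) = 2 ∧ u.1 \ v.1 = u.1 \ w.1 ∪ w.1 \ v.1 := by
  have huw := johnsonGraph_adj_iff_card_sdiff.mp hw.1
  have hwv : #(w.1 \ v.1) = 1 := by
    rw [card_sdiff_comm (by rw [w.2, v.2])]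
    exact johnsonGraph_adj_iff_card_sdiff.mp hw.2
  have hle : #(u.1 \ v.1) ≤ 2 :=
    (card_le_card (sdiff_triangle u.1 w.1 v.1)).trans ((card_union_le _ _).trans (by omega))
  have hpos : #(u.1 \ v.1) ≠ 0 := by
    rw [Ne, card_eq_zero, sdiff_eq_empty_iff_subset]
    exact fun hsub => hne (Subtype.ext (eq_of_subset_of_card_le hsub (by rw [u.2, v.2])))
  have htwo : #(u.1 \ v.1) = 2 := by
    have := mt johnsonGraph_adj_iff_card_sdiff.mpr h
    omega
  exact ⟨htwo, sdiff_eq_sdiff_union_sdiff_of_card_le (by omega)⟩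

lemma johnsonGraph_ncard_commonNeighbors_le (hne : u ≠ v) (h : ¬ (johnsonGraph n k).Adj u v) :
    ((johnsonGraph n k).commonNeighbors u v).ncard ≤ 4 := by
  rcases ((johnsonGraph n k).commonNeighbors u v).eq_empty_or_nonempty with hC | ⟨w₀, hw₀⟩
  · simp [hC]
  have hsplit : ∀ w ∈ (johnsonGraph n k).commonNeighbors u v,
      (#(u.1 \ v.1) = 2 ∧ u.1 \ v.1 = u.1 \ w.1 ∪ w.1 \ v.1) ∧
        (#(v.1 \ u.1) = 2 ∧ v.1 \ u.1 = v.1 \ w.1 ∪ w.1 \ u.1) := fun w hw =>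
    ⟨johnsonGraph_sdiff_eq_of_mem_commonNeighbors hne h hw,
      johnsonGraph_sdiff_eq_of_mem_commonNeighbors hne.symm (fun h' => h h'.symm)
        ((commonNeighbors_symm _ u v).subset hw)⟩
  have hrecover : ∀ w ∈ (johnsonGraph n k).commonNeighbors u v,
      w.1 = (u.1 ∪ v.1) \ (u.1 \ w.1 ∪ v.1 \ w.1) := by
    intro w hw
    rw [← union_sdiff_distrib, Finset.sdiff_sdiff_eq_self]
    intro x hx
    by_contra hxuv
    rw [mem_union, not_or] at hxuv
    have hx' : x ∈ u.1 \ v.1 := by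
      rw [(hsplit w hw).1.2]
      exact mem_union_right _ (mem_sdiff.mpr ⟨hx, hxuv.2⟩)
    exact hxuv.1 (mem_sdiff.mp hx').1
  calc ((johnsonGraph n k).commonNeighbors u v).ncard
      ≤ (↑(powersetCard 1 (u.1 \ v.1) ×ˢ powersetCard 1 (v.1 \ u.1)) :
          Set (Finset (Fin n) × Finset (Fin n))).ncard := by
        refine Set.ncard_le_ncard_of_injOn (fun w => (u.1 \ w.1, v.1 \ w.1)) ?_ ?_
        · intro w hw
          rw [mem_coe, mem_product, mem_powersetCard, mem_powersetCard, (hsplit w hw).1.2,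
            (hsplit w hw).2.2]
          exact ⟨⟨subset_union_left, johnsonGraph_adj_iff_card_sdiff.mp hw.1⟩,
            ⟨subset_union_left, johnsonGraph_adj_iff_card_sdiff.mp hw.2⟩⟩
        · intro w hw w' hw' he
          simp only [Prod.mk.injEq] at he
          exact Subtype.ext (by rw [hrecover w hw, hrecover w' hw', he.1, he.2])
    _ = 4 := by
      rw [Set.ncard_coe_finset, card_product, card_powersetCard, card_powersetCard,
        (hsplit w₀ hw₀).1.1, (hsplit w₀ hw₀).2.1]
      rfl

lemma johnsonGraph_commonNeighborThreshold (hn : 7 ≤ n) :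
    (johnsonGraph n k).CommonNeighborThreshold 5 := by
  intro u v hne
  constructor
  · intro h
    have := johnsonGraph_le_ncard_commonNeighbors h
    omega
  · intro h
    by_contra hadj
    have := johnsonGraph_ncard_commonNeighbors_le hne hadj
    omega

end JohnsonGraph

theorem johnson_stable_general (n k : ℕ) (hn6 : 6 ≤ n) (hne6 : n ≠ 6)
    (hk1 : 1 ≤ k) (hk2 : k ≤ n - 1) :
    IsStable (johnsonGraph n k) := by
  have hn : 7 ≤ n := by omega
  have hX := johnsonGraph_commonNeighborThreshold (k := k) hn
  exact hX.isStable (by norm_num) (johnsonGraph_connected (by omega))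
    (hX.twinFree (johnsonGraph_not_isIsolated hk1 (by omega)))

theorem johnson_stable (n k : ℕ) (hn6 : 6 ≤ n) (hne6 : n ≠ 6)
    (hk1 : 1 ≤ k) (hk2 : k ≤ n - 1)
    (h21 : ¬(n = 2 ∧ k = 1)) (h42 : ¬(n = 4 ∧ k = 2)) :
    IsStable (johnsonGraph n k) :=
  johnson_stable_general n k hn6 hne6 hk1 hk2
end

section
/- Let X be a connected, non-bipartite, twin-free, triangle-free graph of diameter 2. Then X is stable. -/
/-!
Because `X` is connected and not bipartite, `BX` is connected, so an automorphism `α` of `BX`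
shifts the `Bool` coordinate by one constant `b`. It then acts on the two sheets `V × {i}` by
bijections `σ, δ` of `V` with `x ~ y ↔ σ x ~ δ y`. If `σ x ≠ δ x`, triangle-freeness leaves no
edge between the neighbourhoods of `σ x` and `δ x`, while diameter two would give such an edge
from any vertex adjacent to only one of them; so `σ x` and `δ x` are twins. Hence `σ = δ` is an
automorphism of `X`, and `α` is expected.
-/

open SimpleGraph

namespace SimpleGraph

variable {V : Type*} {G : SimpleGraph V}

lemma Reachable.apply_eq_of_forall_adj {β : Type*} {f : V → β}
    (hf : ∀ x y, G.Adj x y → f x = f y) {u v : V} (h : G.Reachable u v) : f u = f v := by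
  obtain ⟨w⟩ := h
  induction w with
  | nil => rfl
  | cons hadj _ ih => exact (hf _ _ hadj).trans ih

lemma commonNeighbors_nonempty_of_ediam_le_two (h : G.ediam ≤ 2) {u v : V} (huv : u ≠ v)
    (hadj : ¬G.Adj u v) : (G.commonNeighbors u v).Nonempty := by
  refine (edist_eq_two_iff.mp (le_antisymm (edist_le_ediam.trans h) ?_)).2.2
  by_contra! hlt
  have := edist_le_one_iff_adj_or_eq.mp (Order.le_of_lt_add_one hlt)
  tauto

end SimpleGraph

section doubleCover

variable {V : Type*} {X : SimpleGraph V}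

theorem doubleCover_connected (hconn : X.Connected) (hnbip : ¬X.Colorable 2) :
    (doubleCover X).Connected := by
  obtain ⟨x₀⟩ := hconn.nonempty
  have : Nonempty (V × Bool) := ⟨(x₀, false)⟩
  refine ⟨fun p q => ?_⟩
  set R : V × Bool → Prop := (doubleCover X).Reachable p
  have hR : ∀ r r', (doubleCover X).Adj r r' → R r = R r' := fun r r' h =>
    propext ⟨fun hr => hr.trans h.reachable, fun hr => hr.trans h.symm.reachable⟩
  have hR_adj : ∀ x y b, X.Adj x y → R (x, b) = R (y, !b) := fun x y b h =>
    hR _ _ ⟨h, by cases b <;> simp⟩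
  -- The sheets either agree everywhere or disagree everywhere; in the second case
  -- `x ↦ R (x, false)` is a proper 2-colouring of `X`.
  have hsheets : ∀ x y, (R (x, false) ↔ R (x, true)) = (R (y, false) ↔ R (y, true)) :=
    fun x y => (hconn x y).apply_eq_of_forall_adj (f := fun x => R (x, false) ↔ R (x, true))
      fun u v h => by
        rw [hR_adj u v false h, hR_adj u v true h]
        exact propext iff_comm
  by_cases hagree : R (x₀, false) ↔ R (x₀, true)
  · have hsame : ∀ r, R r = R (r.1, false) := fun ⟨x, b⟩ => by
      cases b
      · rfl
      · exact (propext ((hsheets x x₀) ▸ hagree)).symm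
    have hconst : ∀ x y, R (x, false) = R (y, false) := fun x y =>
      (hconn x y).apply_eq_of_forall_adj (f := fun x => R (x, false))
        fun u v h => (hR_adj u v false h).trans (hsame (v, true))
    have hRq : R q = R p := (hsame q).trans ((hconst q.1 p.1).trans (hsame p).symm)
    exact hRq ▸ Reachable.refl p
  · refine absurd ?_ hnbip
    have hcol : X.Coloring Prop := Coloring.mk (fun x => R (x, false)) fun {x y} h hxy => by
      have hy := (hsheets y x₀) ▸ hagree
      rw [hR_adj x y false h] at hxy
      exact hy (hxy ▸ Iff.rfl)
    simpa using hcol.colorable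

end doubleCover

section sheets

variable {V : Type*} {X : SimpleGraph V} (α : doubleCover X ≃g doubleCover X)

theorem exists_forall_snd_apply_eq_xor (hBX : (doubleCover X).Connected) :
    ∃ b, ∀ p, (α p).2 = xor p.2 b := by
  obtain ⟨p₀⟩ := hBX.nonempty
  refine ⟨xor (α p₀).2 p₀.2, fun p => ?_⟩
  have hshift : xor (α p).2 p.2 = xor (α p₀).2 p₀.2 :=
    (hBX p p₀).apply_eq_of_forall_adj (f := fun p => xor (α p).2 p.2) fun q r h => by
      have hα : (α q).2 ≠ (α r).2 := (α.map_adj_iff.mpr h).2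
      have hqr : q.2 ≠ r.2 := h.2
      revert hα hqr
      cases (α q).2 <;> cases (α r).2 <;> cases q.2 <;> cases r.2 <;> decide
  rw [← hshift, Bool.xor_comm p.2, Bool.xor_assoc, Bool.xor_self, Bool.xor_false]

def sheetMap (i : Bool) (x : V) : V := (α (x, i)).1

variable {α} {b : Bool} (hb : ∀ p, (α p).2 = xor p.2 b)
include hb

lemma apply_eq_sheetMap (x : V) (i : Bool) : α (x, i) = (sheetMap α i x, xor i b) :=
  Prod.ext rfl (hb _)

lemma sheetMap_bijective (i : Bool) : Function.Bijective (sheetMap α i) := by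
  refine ⟨fun x y hxy => ?_, fun y => ?_⟩
  · have : α (x, i) = α (y, i) := by
      rw [apply_eq_sheetMap hb x i, apply_eq_sheetMap hb y i, hxy]
    exact congrArg Prod.fst (α.injective this)
  · obtain ⟨p, hp⟩ : ∃ p, α p = (y, xor i b) := ⟨_, α.apply_symm_apply _⟩
    have hi : p.2 = i := by simpa [hp] using (hb p).symm
    refine ⟨p.1, ?_⟩
    rw [sheetMap, ← hi, hp]

lemma adj_iff_adj_sheetMap (x y : V) :
    X.Adj x y ↔ X.Adj (sheetMap α false x) (sheetMap α true y) := by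
  have := α.map_adj_iff (v := (x, false)) (w := (y, true))
  rw [apply_eq_sheetMap hb, apply_eq_sheetMap hb] at this
  simpa [doubleCover] using this.symm

theorem isExpected_of_sheetMap_eq (hsheets : sheetMap α false = sheetMap α true) :
    IsExpected X α := by
  let φ : X ≃g X := ⟨Equiv.ofBijective _ (sheetMap_bijective hb false), fun {x y} => by
    simpa [← hsheets] using (adj_iff_adj_sheetMap hb x y).symm⟩
  refine ⟨φ, b, fun ⟨x, i⟩ => ?_⟩
  rw [apply_eq_sheetMap hb]
  cases i
  · rfl
  · simp [φ, hsheets]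

end sheets

section twoFold

/- Pairs `(σ, δ)` satisfying `h` are the two-fold automorphisms of Lauri, Mizzi and Scapellato;
the two sheet maps of an automorphism of `BX` form one. -/

variable {V : Type*} {X : SimpleGraph V} {σ δ : V → V}
  (h : ∀ x y, X.Adj x y ↔ X.Adj (σ x) (δ y))
include h

lemma adj_iff_adj_swap (x y : V) : X.Adj x y ↔ X.Adj (δ x) (σ y) := by
  rw [X.adj_comm, h, X.adj_comm]

lemma not_adj_of_adj_of_adj (htfree : X.CliqueFree 3) (hσ : σ.Surjective) (hδ : δ.Surjective)
    {x z w : V} (hz : X.Adj (σ x) z) (hw : X.Adj (δ x) w) : ¬X.Adj z w := by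
  obtain ⟨z, rfl⟩ := hδ z
  obtain ⟨w, rfl⟩ := hσ w
  intro hzw
  have hxz : X.Adj x z := (h x z).mpr hz
  have hwx : X.Adj w x := (h w x).mpr hw.symm
  have hwz : X.Adj w z := (h w z).mpr hzw.symm
  exact isIndepSet_neighborSet_of_triangleFree X htfree x hxz hwx.symm hwz.ne.symm hwz.symm

lemma adj_of_adj_of_ediam_le_two (htfree : X.CliqueFree 3) (hdiam : X.ediam ≤ 2)
    (hσ : σ.Surjective) (hδ : δ.Surjective) {x z : V} (hz : X.Adj (σ x) z) :
    X.Adj (δ x) z := by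
  by_contra hzδ
  have hne : z ≠ δ x := by
    rintro rfl
    exact X.irrefl ((h x x).mpr hz)
  obtain ⟨w, hzw, hδw⟩ :=
    commonNeighbors_nonempty_of_ediam_le_two hdiam hne fun h' => hzδ h'.symm
  exact not_adj_of_adj_of_adj h htfree hσ hδ hz hδw hzw

theorem eq_of_forall_adj_iff_adj (htf : TwinFree X) (htfree : X.CliqueFree 3)
    (hdiam : X.ediam ≤ 2) (hσ : σ.Surjective) (hδ : δ.Surjective) : σ = δ :=
  funext fun _ => htf _ _ <| Set.ext fun _ =>
    ⟨adj_of_adj_of_ediam_le_two h htfree hdiam hσ hδ,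
      adj_of_adj_of_ediam_le_two (adj_iff_adj_swap h) htfree hdiam hδ hσ⟩

end twoFold

theorem triangle_free_diam_two_stable_general {V : Type*} (X : SimpleGraph V)
    (hconn : X.Connected) (hnbip : ¬X.Colorable 2) (htf : TwinFree X)
    (htfree : X.CliqueFree 3) (hdiam : X.diam = 2) :
    IsStable X := by
  intro α
  obtain ⟨b, hb⟩ := exists_forall_snd_apply_eq_xor α (doubleCover_connected hconn hnbip)
  have hediam : X.ediam ≤ 2 := ((ENat.toNat_eq_iff two_ne_zero).mp hdiam).le
  exact isExpected_of_sheetMap_eq hb <| eq_of_forall_adj_iff_adj (adj_iff_adj_sheetMap hb)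
    htf htfree hediam (sheetMap_bijective hb false).2 (sheetMap_bijective hb true).2

theorem triangle_free_diam_two_stable {V : Type*} [Fintype V] (X : SimpleGraph V)
    (hconn : X.Connected) (hnbip : ¬X.Colorable 2) (htf : TwinFree X)
    (htfree : X.CliqueFree 3) (hdiam : X.diam = 2) :
    IsStable X :=
  triangle_free_diam_two_stable_general X hconn hnbip htf htfree hdiam
end
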